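/- Let W ∈ L²(ℤ_p × ℤ_p), W_in ∈ L²(ℤ_p × ℤ_p), x ∈ L²(ℤ_p), ξ ∈ L²(ℤ_p), and let φ : ℝ → ℝ be Lipschitz with constant L_φ, φ(0) = 0, and bounded with sup_{s∈ℝ} |φ(s)| ≤ L_φ. If 0 < L_φ ‖W‖₂ < 1, then the unique h ∈ L²(ℤ_p) satisfying h(u) = ∫_{ℤ_p} W(u,y) φ(h(y)) dμ(y) + ∫_{ℤ_p} W_in(u,y) x(y) dμ(y) + ξ(u) almost everywhere satisfies the bound ‖h‖₂ ≤ 1 + ‖W_in‖₂ ‖x‖₂ + ‖ξ‖₂. -/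

import Mathlib

/-!
The fixed-point equation writes `h` as `T_W (φ ∘ h) + T_{W_in} x + ξ`, where
`T_K v = ∫ K(·, y) v(y) dμ(y)`. By Cauchy–Schwarz in `y` followed by Tonelli, `T_K` has `L²`
operator norm at most `‖K‖₂`. Since `μ` is a probability measure and `|φ| ≤ Lφ`, we get
`‖φ ∘ h‖₂ ≤ Lφ`, so the recurrent term has norm at most `Lφ ‖W‖₂ < 1`; the triangle inequality
gives the bound.
-/

open MeasureTheory
open scoped NNReal ENNReal

noncomputable instance (p : ℕ) [Fact p.Prime] : MeasurableSpace ℤ_[p] := borel _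
instance (p : ℕ) [Fact p.Prime] : BorelSpace ℤ_[p] := ⟨rfl⟩

/-- The normalized Haar measure on the compact additive group `ℤ_[p]`
(so that `padicHaar p Set.univ = 1`). -/
noncomputable def padicHaar (p : ℕ) [Fact p.Prime] : Measure ℤ_[p] :=
  Measure.addHaarMeasure (⊤ : TopologicalSpace.PositiveCompacts ℤ_[p])

instance (p : ℕ) [Fact p.Prime] : IsProbabilityMeasure (padicHaar p) :=
  ⟨by
    rw [padicHaar, ← TopologicalSpace.PositiveCompacts.coe_top (α := ℤ_[p])]
    exact Measure.addHaarMeasure_self⟩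

section KernelOperator

variable {α β : Type*} [MeasurableSpace α] [MeasurableSpace β] {μ : Measure α} {ν : Measure β}

theorem enorm_integral_mul_le_eLpNorm_mul_eLpNorm {f g : β → ℝ}
    (hf : AEStronglyMeasurable f ν) (hg : AEStronglyMeasurable g ν) :
    ‖∫ y, f y * g y ∂ν‖ₑ ≤ eLpNorm f 2 ν * eLpNorm g 2 ν :=
  calc ‖∫ y, f y * g y ∂ν‖ₑ ≤ ∫⁻ y, ‖f y * g y‖ₑ ∂ν := enorm_integral_le_lintegral_enorm _
    _ = eLpNorm (f • g) 1 ν := eLpNorm_one_eq_lintegral_enorm.symm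
    _ ≤ eLpNorm f 2 ν * eLpNorm g 2 ν := eLpNorm_smul_le_mul_eLpNorm (p := 2) (q := 2) hg hf

theorem eLpNorm_two_rpow_two {ε : Type*} [ENorm ε] (f : α → ε) :
    eLpNorm f 2 μ ^ (2 : ℝ) = ∫⁻ x, ‖f x‖ₑ ^ (2 : ℝ) ∂μ := by
  simpa using eLpNorm_nnreal_pow_eq_lintegral (μ := μ) (f := f) (p := 2) two_ne_zero

theorem lintegral_eLpNorm_slice_rpow_two [SFinite ν] {K : α × β → ℝ}
    (hK : AEStronglyMeasurable K (μ.prod ν)) :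
    ∫⁻ x, eLpNorm (fun y ↦ K (x, y)) 2 ν ^ (2 : ℝ) ∂μ = eLpNorm K 2 (μ.prod ν) ^ (2 : ℝ) := by
  simp only [eLpNorm_two_rpow_two]
  exact (lintegral_prod _ (hK.enorm.pow_const _)).symm

theorem MeasureTheory.AEStronglyMeasurable.integral_kernel_mul [SFinite ν]
    {K : α × β → ℝ} {v : β → ℝ}
    (hK : AEStronglyMeasurable K (μ.prod ν)) (hv : AEStronglyMeasurable v ν) :
    AEStronglyMeasurable (fun x ↦ ∫ y, K (x, y) * v y ∂ν) μ :=
  (hK.mul (hv.comp_snd)).integral_prod_right'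

theorem eLpNorm_integral_kernel_mul_le [SFinite ν] {K : α × β → ℝ} {v : β → ℝ}
    (hK : AEStronglyMeasurable K (μ.prod ν)) (hv : AEStronglyMeasurable v ν) :
    eLpNorm (fun x ↦ ∫ y, K (x, y) * v y ∂ν) 2 μ ≤ eLpNorm K 2 (μ.prod ν) * eLpNorm v 2 ν := by
  have hslice : AEMeasurable (fun x ↦ eLpNorm (fun y ↦ K (x, y)) 2 ν ^ (2 : ℝ)) μ := by
    simp only [eLpNorm_two_rpow_two]
    exact (hK.enorm.pow_const _).lintegral_prod_right'
  rw [← ENNReal.rpow_le_rpow_iff two_pos, eLpNorm_two_rpow_two,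
    ENNReal.mul_rpow_of_nonneg _ _ zero_le_two, ← lintegral_eLpNorm_slice_rpow_two hK,
    ← lintegral_mul_const'' _ hslice]
  refine lintegral_mono_ae ?_
  filter_upwards [hK.prodMk_left] with x hKx
  rw [← ENNReal.mul_rpow_of_nonneg _ _ zero_le_two]
  exact ENNReal.rpow_le_rpow (enorm_integral_mul_le_eLpNorm_mul_eLpNorm hKx hv) zero_le_two

end KernelOperator

theorem stmt_5_general (p : ℕ) [Fact p.Prime]
    (W Win : ℤ_[p] × ℤ_[p] → ℝ) (x ξ : ℤ_[p] → ℝ)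
    (hW : MemLp W 2 ((padicHaar p).prod (padicHaar p)))
    (hWin : MemLp Win 2 ((padicHaar p).prod (padicHaar p)))
    (hx : MemLp x 2 (padicHaar p)) (hξ : MemLp ξ 2 (padicHaar p))
    (φ : ℝ → ℝ) (Lφ : ℝ≥0) (hφ : LipschitzWith Lφ φ)
    (hφbdd : ∀ s : ℝ, |φ s| ≤ Lφ)
    (hlt : (Lφ : ℝ≥0∞) * eLpNorm W 2 ((padicHaar p).prod (padicHaar p)) < 1)
    (h : ℤ_[p] → ℝ) (hh : MemLp h 2 (padicHaar p))
    (hfix : ∀ᵐ u ∂(padicHaar p),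
      h u = ∫ y, W (u, y) * φ (h y) ∂(padicHaar p)
          + ∫ y, Win (u, y) * x y ∂(padicHaar p) + ξ u) :
    eLpNorm h 2 (padicHaar p)
      ≤ 1 + eLpNorm Win 2 ((padicHaar p).prod (padicHaar p)) * eLpNorm x 2 (padicHaar p)
          + eLpNorm ξ 2 (padicHaar p) := by
  set μ := padicHaar p
  set recurrent := fun u ↦ ∫ y, W (u, y) * φ (h y) ∂μ
  set input := fun u ↦ ∫ y, Win (u, y) * x y ∂μ
  have hφh : AEStronglyMeasurable (fun y ↦ φ (h y)) μ :=
    hφ.continuous.comp_aestronglyMeasurable hh.aestronglyMeasurable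
  have hφh_le : eLpNorm (fun y ↦ φ (h y)) 2 μ ≤ Lφ := by
    simpa using eLpNorm_le_of_ae_bound (μ := μ) (p := 2)
      (.of_forall fun y ↦ (Real.norm_eq_abs _).trans_le (hφbdd (h y)))
  have hrecurrent : eLpNorm recurrent 2 μ ≤ 1 :=
    calc _ ≤ eLpNorm W 2 (μ.prod μ) * eLpNorm (fun y ↦ φ (h y)) 2 μ :=
          eLpNorm_integral_kernel_mul_le hW.aestronglyMeasurable hφh
      _ ≤ eLpNorm W 2 (μ.prod μ) * Lφ := by gcongr
      _ ≤ 1 := by rw [mul_comm]; exact hlt.le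
  have hrecurrent_meas := hW.aestronglyMeasurable.integral_kernel_mul hφh
  have hinput_meas := hWin.aestronglyMeasurable.integral_kernel_mul hx.aestronglyMeasurable
  calc eLpNorm h 2 μ = eLpNorm (recurrent + input + ξ) 2 μ := eLpNorm_congr_ae hfix
    _ ≤ eLpNorm recurrent 2 μ + eLpNorm input 2 μ + eLpNorm ξ 2 μ := by
      grw [eLpNorm_add_le (hrecurrent_meas.add hinput_meas) hξ.aestronglyMeasurable one_le_two,
        eLpNorm_add_le hrecurrent_meas hinput_meas one_le_two]
    _ ≤ _ := by
      grw [hrecurrent, eLpNorm_integral_kernel_mul_le hWin.aestronglyMeasurable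
        hx.aestronglyMeasurable]

/-- In the contraction regime, if moreover `φ` is bounded by `Lφ`, the
hidden state satisfies `‖h‖₂ ≤ 1 + ‖W_in‖₂ ‖x‖₂ + ‖ξ‖₂`. -/
theorem stmt_5 (p : ℕ) [Fact p.Prime]
    (W Win : ℤ_[p] × ℤ_[p] → ℝ) (x ξ : ℤ_[p] → ℝ)
    (hW : MemLp W 2 ((padicHaar p).prod (padicHaar p)))
    (hWin : MemLp Win 2 ((padicHaar p).prod (padicHaar p)))
    (hx : MemLp x 2 (padicHaar p)) (hξ : MemLp ξ 2 (padicHaar p))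
    (φ : ℝ → ℝ) (Lφ : ℝ≥0) (hφ : LipschitzWith Lφ φ) (hφ0 : φ 0 = 0)
    (hφbdd : ∀ s : ℝ, |φ s| ≤ Lφ)
    (hpos : 0 < (Lφ : ℝ≥0∞) * eLpNorm W 2 ((padicHaar p).prod (padicHaar p)))
    (hlt : (Lφ : ℝ≥0∞) * eLpNorm W 2 ((padicHaar p).prod (padicHaar p)) < 1)
    (h : ℤ_[p] → ℝ) (hh : MemLp h 2 (padicHaar p))
    (hfix : ∀ᵐ u ∂(padicHaar p),
      h u = ∫ y, W (u, y) * φ (h y) ∂(padicHaar p)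
          + ∫ y, Win (u, y) * x y ∂(padicHaar p) + ξ u) :
    eLpNorm h 2 (padicHaar p)
      ≤ 1 + eLpNorm Win 2 ((padicHaar p).prod (padicHaar p)) * eLpNorm x 2 (padicHaar p)
          + eLpNorm ξ 2 (padicHaar p) :=
  stmt_5_general p W Win x ξ hW hWin hx hξ φ Lφ hφ hφbdd hlt h hh hfix
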